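/- A node first obtains path information exactly at iteration dist(s,o): for every vertex o reachable from s, the generalized Bellman–Ford iterate at iteration t = dist(s,o) equals the sum of the weights of all shortest walks from s to o, i.e., x⁽ᵈⁱˢᵗ⁽ˢ'ᵒ⁾⁾(o) = ∑_{p ∈ P_{dist(s,o)}(s,o)} weight(p), where P_ℓ(s,o) is the set of walks of length ℓ from s to o in G. -/

import Mathlib

open Finset

/-- The weight of a walk: the product of the edge weights `wt v_{i-1} v_i` along the
walk, with the length-0 walk having weight 1. -/
def SimpleGraph.Walk.weight {V : Type*} {G : SimpleGraph V} {R : Type*} [CommSemiring R]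
    (wt : V → V → R) {u v : V} (p : G.Walk u v) : R :=
  (p.darts.map fun d => wt d.fst d.snd).prod

/-- `pathSum G wt t s o = ∑_{p ∈ P_t(s,o)} weight(p)`, the sum of the weights of all
walks of length `t` from `s` to `o` in `G`. -/
def pathSum {V : Type*} [Fintype V] [DecidableEq V] (G : SimpleGraph V) [DecidableRel G.Adj]
    {R : Type*} [CommSemiring R] (wt : V → V → R) (t : ℕ) (s o : V) : R :=
  ∑ p ∈ G.finsetWalkLength t s o, p.weight wt

/-- The generalized Bellman–Ford iterates `x⁽ᵗ⁾` with source `s`: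
`x⁽⁰⁾(o) = 1` if `o = s` and `0` otherwise, and
`x⁽ᵗ⁾(o) = (∑_{u adjacent to o} x⁽ᵗ⁻¹⁾(u) * wt u o) + x⁽⁰⁾(o)` for `t ≥ 1`. -/
def genBF {V : Type*} [Fintype V] [DecidableEq V] (G : SimpleGraph V) [DecidableRel G.Adj]
    {R : Type*} [CommSemiring R] (wt : V → V → R) (s : V) : ℕ → V → R
  | 0 => fun o => if o = s then 1 else 0
  | (t + 1) => fun o =>
      (∑ u ∈ G.neighborFinset o, genBF G wt s t u * wt u o) + (if o = s then 1 else 0)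

/-! Reading the recursion for `genBF` backwards, `x⁽ᵗ⁾(o)` is the total weight of the walks
from `s` to `o` of length at most `t`: a walk of length `k + 1` ending at `o` is a walk of
length `k` ending at a neighbour `u` of `o`, followed by the edge `u o`. No walk from `s` to `o`
is shorter than `dist(s,o)`, so at `t = dist(s,o)` only the shortest walks contribute. -/

namespace SimpleGraph.Walk

variable {V R : Type*} {G : SimpleGraph V} [CommSemiring R] (wt : V → V → R)

@[simp]
lemma weight_nil {u : V} : (nil : G.Walk u u).weight wt = 1 := rfl

@[simp]
lemma weight_cons {u v w : V} (h : G.Adj u v) (p : G.Walk v w) :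
    (cons h p).weight wt = wt u v * p.weight wt := by
  simp [weight]

lemma weight_reverse {u v : V} (p : G.Walk u v) : p.reverse.weight wt = p.weight (flip wt) := by
  simp [weight, darts_reverse, List.map_reverse, List.prod_reverse, Function.comp_def, flip]

end SimpleGraph.Walk

section PathSum

open SimpleGraph

variable {V R : Type*} [Fintype V] [DecidableEq V] (G : SimpleGraph V) [DecidableRel G.Adj]
  [CommSemiring R] (wt : V → V → R)

lemma pathSum_zero (s o : V) : pathSum G wt 0 s o = if o = s then 1 else 0 := by
  rcases eq_or_ne o s with rfl | h
  · simp [pathSum, finsetWalkLength]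
  · simp [pathSum, finsetWalkLength, h, h.symm]

lemma pathSum_eq_zero_of_lt_dist {n : ℕ} {s o : V} (hn : n < G.dist s o) :
    pathSum G wt n s o = 0 :=
  sum_eq_zero fun p hp => absurd (mem_finsetWalkLength_iff.mp hp ▸ dist_le p) hn.not_ge

lemma pathSum_flip (n : ℕ) (s o : V) : pathSum G (flip wt) n o s = pathSum G wt n s o := by
  refine sum_nbij' (·.reverse) (·.reverse) ?_ ?_ ?_ ?_ ?_ <;>
    simp [mem_finsetWalkLength_iff, Walk.weight_reverse]

lemma pathSum_succ_left (n : ℕ) (s o : V) :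
    pathSum G wt (n + 1) s o = ∑ u ∈ G.neighborFinset s, wt s u * pathSum G wt n u o := by
  rw [pathSum, finsetWalkLength, sum_biUnion, neighborFinset_def, ← sum_set_coe]
  · simp only [pathSum, sum_map, mul_sum]
    exact sum_congr rfl fun u _ => sum_congr rfl fun p _ => Walk.weight_cons wt _ p
  · rintro ⟨u, _⟩ - ⟨v, _⟩ - huv
    simp only [Function.onFun, Finset.disjoint_left, Finset.mem_map]
    rintro _ ⟨p, -, rfl⟩ ⟨q, -, hq⟩
    exact huv (Subtype.ext (Walk.cons.inj hq).1.symm)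

lemma pathSum_succ_right (n : ℕ) (s o : V) :
    pathSum G wt (n + 1) s o = ∑ u ∈ G.neighborFinset o, pathSum G wt n s u * wt u o := by
  rw [← pathSum_flip, pathSum_succ_left]
  simp only [pathSum_flip, flip, mul_comm]

lemma genBF_eq_sum_pathSum (s : V) (t : ℕ) (o : V) :
    genBF G wt s t o = ∑ k ∈ range (t + 1), pathSum G wt k s o := by
  induction t generalizing o with
  | zero => simp [genBF, pathSum_zero]
  | succ t ih =>
    simp only [genBF, ih, sum_mul, sum_range_succ' _ (t + 1), pathSum_zero, pathSum_succ_right]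
    rw [sum_comm]

end PathSum

theorem genBF_at_dist_eq_shortest_pathSum_general {V : Type*} [Fintype V] [DecidableEq V]
    (G : SimpleGraph V) [DecidableRel G.Adj] {R : Type*} [CommSemiring R]
    (wt : V → V → R) (s : V) (o : V) :
    genBF G wt s (G.dist s o) o = pathSum G wt (G.dist s o) s o := by
  rw [genBF_eq_sum_pathSum, sum_range_succ,
    sum_eq_zero fun k hk => pathSum_eq_zero_of_lt_dist G wt (mem_range.mp hk), zero_add]

/-- A node first obtains path information exactly at iteration
`dist(s,o)`: for every vertex `o` reachable from `s`, the generalized Bellman–Ford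
iterate at iteration `t = dist(s,o)` equals the sum of the weights of all shortest
walks from `s` to `o`: `x⁽ᵈⁱˢᵗ⁽ˢ,ᵒ⁾⁾(o) = ∑_{p ∈ P_{dist(s,o)}(s,o)} weight(p)`. -/
theorem genBF_at_dist_eq_shortest_pathSum {V : Type*} [Fintype V] [DecidableEq V]
    (G : SimpleGraph V) [DecidableRel G.Adj] {R : Type*} [CommSemiring R]
    (wt : V → V → R) (s : V) (o : V) (h : G.Reachable s o) :
    genBF G wt s (G.dist s o) o = pathSum G wt (G.dist s o) s o :=
  genBF_at_dist_eq_shortest_pathSum_general G wt s o
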